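/- Let (X_n)_{n∈ℕ} be infinite subsets of ℕ with X_{n+1} ⊆* X_n for all n, and let α_n ∈ 𝕋^ℕ satisfy α_n·α_m⁻¹ ∈ F_{X_n} whenever n ≤ m. Let Y be an infinite subset of ℕ with Y ⊆* X_n for every n. Then there exists β ∈ 𝕋^ℕ such that β·α_n⁻¹ ∈ F_{X_n} for every n ∈ ℕ. -/

import Mathlib

open Filter Topology MultiplierAlgebra

noncomputable section

/-- `Δ_I(α,β) = max_{i,j ∈ I} |α(i)·conj(α(j)) − β(i)·conj(β(j))|`
(the maximum over the empty set being `0`). -/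
def Delta (I : Finset ℕ) (α β : ℕ → Circle) : ℝ :=
  ((I ×ˢ I).sup fun p : ℕ × ℕ =>
    ‖(α p.1 : ℂ) * (starRingEnd ℂ) (α p.2 : ℂ) -
      (β p.1 : ℂ) * (starRingEnd ℂ) (β p.2 : ℂ)‖₊ : NNReal)

/-- `n(X,j)`: the `j`-th element of `{0} ∪ X` in increasing order. -/
def nEnum (X : Set ℕ) (j : ℕ) : ℕ := Nat.nth (· ∈ insert 0 X) j

/-- `I(X,j) = [n(X,j), n(X,j+1))`, as a finite set of naturals. -/
def intvl (X : Set ℕ) (j : ℕ) : Finset ℕ := Finset.Ico (nEnum X j) (nEnum X (j + 1))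

/-- Membership in `F_X`: `lim_j Δ_{I(X,j) ∪ I(X,j+1)}(α, 1) = 0`. -/
def memF (X : Set ℕ) (α : ℕ → Circle) : Prop :=
  Tendsto (fun j => Delta (intvl X j ∪ intvl X (j + 1)) α 1) atTop (𝓝 0)

/-- `Y ⊆* X`: almost inclusion, i.e. `Y \ X` is finite. -/
def AlmostSubset (Y X : Set ℕ) : Prop := (Y \ X).Finite

/-!
`memF X γ` says that `dist (γ i) (γ i')` tends to `0` over the pairs `i ≤ i'` separated by at
most one point of `{0} ∪ X`, and the metric of `𝕋` is invariant under multiplication, which is all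
the construction needs. Choose boundary points `0 = y 0 < y 1 < ⋯` in `Y` so far out that beyond
`y s` the set `Y` lies in `X 0, …, X s` and, for `n ≤ s`, the oscillation of `α s * (α n)⁻¹` along
`X n` is below `1 / (s + 1)`. Let `β` be `α s` on `[y s, y (s + 1))`, rotated by a constant so that
consecutive pieces agree at the boundary points. Beyond `y n` the boundary points lie in `X n`, so a
pair separated by one point of `X n` straddles at most one boundary, and the triangle inequality
through that boundary point bounds the oscillation of `β * (α n)⁻¹` by that of two pieces.
-/

lemma Circle.dist_eq_norm (a b : Circle) : dist a b = ‖(a : ℂ) - b‖ :=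
  _root_.dist_eq_norm (a : ℂ) b

instance : IsIsometricSMul Circle Circle :=
  ⟨fun c => Isometry.of_dist_eq fun a b => by
    rw [smul_eq_mul, smul_eq_mul, Circle.dist_eq_norm, Circle.dist_eq_norm, Circle.coe_mul,
      Circle.coe_mul, ← mul_sub, norm_mul, Circle.norm_coe, one_mul]⟩

lemma norm_mul_conj_sub_one (z w : Circle) :
    ‖(z : ℂ) * (starRingEnd ℂ) (w : ℂ) - 1‖ = dist z w := by
  rw [← Circle.coe_inv_eq_conj, ← Circle.coe_mul, ← Circle.coe_one, ← Circle.dist_eq_norm,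
    ← mul_inv_cancel w, dist_mul_right]

lemma Delta_nonneg (I : Finset ℕ) (α β : ℕ → Circle) : 0 ≤ Delta I α β :=
  NNReal.coe_nonneg _

lemma Delta_one_lt_iff {I : Finset ℕ} {γ : ℕ → Circle} {ε : ℝ} (hε : 0 < ε) :
    Delta I γ 1 < ε ↔ ∀ a ∈ I, ∀ b ∈ I, dist (γ a) (γ b) < ε := by
  lift ε to NNReal using hε.le
  rw [Delta, NNReal.coe_lt_coe, Finset.sup_lt_iff (by exact_mod_cast hε)]
  simp only [Finset.mem_product, and_imp, Prod.forall, Pi.one_apply, Circle.coe_one, map_one,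
    mul_one, ← NNReal.coe_lt_coe, coe_nnnorm, norm_mul_conj_sub_one]
  exact ⟨fun h a ha b hb => h a b ha hb, fun h a b ha hb => h a ha b hb⟩

section Blocks

variable {y : ℕ → ℕ} {i s : ℕ}

def blockIdx (y : ℕ → ℕ) (i : ℕ) : ℕ := Nat.findGreatest (fun s => y s ≤ i) i

lemma gc_blockIdx (hy : StrictMono y) (h0 : y 0 = 0) : GaloisConnection y (blockIdx y) := by
  intro s i
  refine ⟨fun h => Nat.le_findGreatest (hy.le_apply.trans h) h, fun h => ?_⟩
  exact (hy.monotone h).trans (Nat.findGreatest_spec (P := fun s => y s ≤ i) (Nat.zero_le i)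
    (h0.trans_le (Nat.zero_le i)))

lemma blockIdx_eq (hy : StrictMono y) (h0 : y 0 = 0) (h1 : y s ≤ i) (h2 : i < y (s + 1)) :
    blockIdx y i = s := by
  have gc := gc_blockIdx hy h0
  refine le_antisymm (Nat.lt_succ_iff.1 ?_) (gc.le_iff_le.1 h1)
  by_contra! h
  exact (gc.le_iff_le.2 h).not_gt h2

lemma mem_Ico_blockIdx (hy : StrictMono y) (h0 : y 0 = 0) (i : ℕ) :
    i ∈ Set.Ico (y (blockIdx y i)) (y (blockIdx y i + 1)) := by
  have gc := gc_blockIdx hy h0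
  exact ⟨gc.l_u_le i, lt_of_not_ge fun h => (gc.le_iff_le.1 h).not_gt (Nat.lt_succ_self _)⟩

end Blocks

section Grid

variable {X : Set ℕ}

lemma nEnum_strictMono (hX : X.Infinite) : StrictMono (nEnum X) :=
  Nat.nth_strictMono (hX.mono (Set.subset_insert 0 X))

lemma nEnum_zero : nEnum X 0 = 0 :=
  Nat.nth_zero_of_zero (Set.mem_insert 0 X)

lemma nEnum_mem (hX : X.Infinite) (j : ℕ) : nEnum X j ∈ insert 0 X :=
  Nat.nth_mem_of_infinite (hX.mono (Set.subset_insert 0 X)) j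

lemma eq_nEnum_succ (hX : X.Infinite) {g j : ℕ} (hg : g ∈ insert 0 X)
    (h1 : nEnum X j < g) (h2 : g < nEnum X (j + 2)) : g = nEnum X (j + 1) := by
  classical
  have hcount : nEnum X (Nat.count (· ∈ insert 0 X) g) = g := Nat.nth_count hg
  rw [← hcount, (nEnum_strictMono hX).lt_iff_lt] at h1 h2
  rw [← hcount, show Nat.count (· ∈ insert 0 X) g = j + 1 by omega]

lemma intvl_union_intvl_succ (hX : X.Infinite) (j : ℕ) :
    intvl X j ∪ intvl X (j + 1) = Finset.Ico (nEnum X j) (nEnum X (j + 2)) :=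
  Finset.Ico_union_Ico_eq_Ico ((nEnum_strictMono hX).monotone (Nat.le_succ j))
    ((nEnum_strictMono hX).monotone (Nat.le_succ (j + 1)))

/-- For infinite `X`, these are the pairs `i ≤ i'` lying in some `I(X, j) ∪ I(X, j + 1)`. -/
def WithinTwoBlocks (X : Set ℕ) (i i' : ℕ) : Prop :=
  i ≤ i' ∧ (insert 0 X ∩ Set.Ioc i i').Subsingleton

lemma WithinTwoBlocks.mono {i i' a b : ℕ} (h : WithinTwoBlocks X i i') (hia : i ≤ a)
    (hab : a ≤ b) (hbi : b ≤ i') : WithinTwoBlocks X a b :=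
  ⟨hab, h.2.anti (Set.inter_subset_inter_right _ (Set.Ioc_subset_Ioc hia hbi))⟩

lemma WithinTwoBlocks.lt_of_mem {i i' a b : ℕ} (h : WithinTwoBlocks X i i') (hia : i < a)
    (hab : a < b) (ha : a ∈ insert 0 X) (hb : b ∈ insert 0 X) : i' < b := by
  by_contra! hbi
  exact hab.ne (h.2 ⟨ha, hia, hab.le.trans hbi⟩ ⟨hb, hia.trans hab, hbi⟩)

lemma withinTwoBlocks_of_le_of_lt (hX : X.Infinite) {a b j : ℕ} (ha : nEnum X j ≤ a)
    (hab : a ≤ b) (hb : b < nEnum X (j + 2)) : WithinTwoBlocks X a b :=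
  ⟨hab, fun _ hg _ hg' =>
    (eq_nEnum_succ hX hg.1 (ha.trans_lt hg.2.1) (hg.2.2.trans_lt hb)).trans
      (eq_nEnum_succ hX hg'.1 (ha.trans_lt hg'.2.1) (hg'.2.2.trans_lt hb)).symm⟩

end Grid

def OscVanishes {G : Type*} [PseudoMetricSpace G] (X : Set ℕ) (γ : ℕ → G) : Prop :=
  ∀ ε > 0, ∀ᶠ i in atTop, ∀ i', WithinTwoBlocks X i i' → dist (γ i) (γ i') < ε

lemma OscVanishes.inv {G : Type*} [Group G] [PseudoMetricSpace G] [IsIsometricSMul G G]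
    [IsIsometricSMul Gᵐᵒᵖ G] {X : Set ℕ} {γ : ℕ → G} (h : OscVanishes X γ) :
    OscVanishes X γ⁻¹ := by
  simpa only [OscVanishes, Pi.inv_apply, dist_inv_inv] using h

lemma memF_iff_oscVanishes {X : Set ℕ} (hX : X.Infinite) (γ : ℕ → Circle) :
    memF X γ ↔ OscVanishes X γ := by
  have hmono := nEnum_strictMono hX
  simp only [memF, Metric.tendsto_nhds, Real.dist_0_eq_abs, OscVanishes]
  refine forall₂_congr fun ε hε => ?_
  simp only [abs_of_nonneg, Delta_nonneg, Delta_one_lt_iff hε,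
    intvl_union_intvl_succ hX, Finset.mem_Ico]
  constructor
  · intro h
    obtain ⟨J, hJ⟩ := eventually_atTop.1 h
    filter_upwards [eventually_ge_atTop (nEnum X J)] with i hi i' hW
    have gc := gc_blockIdx hmono nEnum_zero
    obtain ⟨hji, hij⟩ := mem_Ico_blockIdx hmono nEnum_zero i
    exact hJ _ (gc.le_iff_le.1 hi) i ⟨hji, hij.trans (hmono (lt_add_one _))⟩ i'
      ⟨hji.trans hW.1, hW.lt_of_mem hij (hmono (lt_add_one _)) (nEnum_mem hX _) (nEnum_mem hX _)⟩
  · intro h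
    filter_upwards [hmono.tendsto_atTop.eventually (eventually_forall_ge_atTop.2 h)]
      with j hj a ha b hb
    rcases le_total a b with hab | hba
    · exact hj a ha.1 b (withinTwoBlocks_of_le_of_lt hX ha.1 hab hb.2)
    · rw [dist_comm]
      exact hj b hb.1 a (withinTwoBlocks_of_le_of_lt hX hb.1 hba ha.2)

lemma AlmostSubset.eventually_mem {A B : Set ℕ} (h : AlmostSubset A B) :
    ∀ᶠ i in atTop, i ∈ A → i ∈ B := by
  filter_upwards [Nat.cofinite_eq_atTop ▸ h.eventually_cofinite_notMem] with i hi hA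
  by_contra hB
  exact hi ⟨hA, hB⟩

lemma Set.Infinite.exists_strictMono_mem_ge {Y : Set ℕ} (hY : Y.Infinite) (N : ℕ → ℕ) :
    ∃ y : ℕ → ℕ, StrictMono y ∧ y 0 = 0 ∧ ∀ s ≠ 0, y s ∈ Y ∧ N s ≤ y s := by
  choose next hnextY hnext using hY.exists_gt
  let y : ℕ → ℕ := fun s => Nat.rec 0 (fun s prev => next (max prev (N (s + 1)))) s
  refine ⟨y, strictMono_nat_of_lt_succ fun s => (le_max_left _ _).trans_lt (hnext _), rfl, ?_⟩
  rintro (_ | s) hs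
  · exact absurd rfl hs
  · exact ⟨hnextY _, (le_max_right _ _).trans (hnext _).le⟩

section Glue

variable {G : Type*} [Group G] {y : ℕ → ℕ} {α : ℕ → ℕ → G} {i s : ℕ}

/-- Rotations chosen so that consecutive pieces of `glue y α` agree at the boundary points. -/
def phase (y : ℕ → ℕ) (α : ℕ → ℕ → G) : ℕ → G
  | 0 => 1
  | s + 1 => phase y α s * α s (y (s + 1)) * (α (s + 1) (y (s + 1)))⁻¹

def glue (y : ℕ → ℕ) (α : ℕ → ℕ → G) (i : ℕ) : G :=
  phase y α (blockIdx y i) * α (blockIdx y i) i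

lemma glue_apply_of_mem (hy : StrictMono y) (h0 : y 0 = 0) (h1 : y s ≤ i) (h2 : i < y (s + 1)) :
    glue y α i = phase y α s * α s i := by
  rw [glue, blockIdx_eq hy h0 h1 h2]

lemma glue_apply_boundary (hy : StrictMono y) (h0 : y 0 = 0) (s : ℕ) :
    glue y α (y (s + 1)) = phase y α s * α s (y (s + 1)) := by
  rw [glue_apply_of_mem hy h0 le_rfl (hy (lt_add_one _)), phase, inv_mul_cancel_right]

lemma dist_mul_apply_eq_of_eq [PseudoMetricSpace G] [IsIsometricSMul G G] {β δ γ : ℕ → G} {c : G}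
    {i i' : ℕ} (h : β i = c * δ i) (h' : β i' = c * δ i') :
    dist ((β * γ) i) ((β * γ) i') = dist ((δ * γ) i) ((δ * γ) i') := by
  simp only [Pi.mul_apply, h, h', mul_assoc, dist_mul_left]

end Glue

lemma oscVanishes_glue_mul {G : Type*} [Group G] [PseudoMetricSpace G] [IsIsometricSMul G G]
    {y : ℕ → ℕ} (hy : StrictMono y) (h0 : y 0 = 0) {α : ℕ → ℕ → G} {X : Set ℕ} {γ : ℕ → G}
    (hyX : ∀ᶠ s in atTop, y s ∈ X)
    (hosc : ∀ ε > 0, ∀ᶠ s in atTop, ∀ i ≥ y s, ∀ i', WithinTwoBlocks X i i' →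
      dist ((α s * γ) i) ((α s * γ) i') < ε) :
    OscVanishes X (glue y α * γ) := by
  intro ε hε
  obtain ⟨S, hS⟩ := eventually_atTop.1 (hyX.and (hosc (ε / 2) (half_pos hε)))
  filter_upwards [eventually_ge_atTop (y (S + 1))] with i hi i' hW
  set s := blockIdx y i
  have hs : S + 1 ≤ s := (gc_blockIdx hy h0).le_iff_le.1 hi
  obtain ⟨hsi, his⟩ := mem_Ico_blockIdx hy h0 i
  have hyX' : ∀ u, s < u → y u ∈ insert 0 X := fun u hu =>
    Set.mem_insert_of_mem _ (hS u (by omega)).1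
  have hi' : i' < y (s + 2) :=
    hW.lt_of_mem his (hy (lt_add_one _)) (hyX' _ (by omega)) (hyX' _ (by omega))
  rcases lt_or_ge i' (y (s + 1)) with hi's | hsi'
  · rw [dist_mul_apply_eq_of_eq (glue_apply_of_mem hy h0 hsi his)
      (glue_apply_of_mem hy h0 (hsi.trans hW.1) hi's)]
    linarith [(hS s (by omega)).2 i hsi i' hW]
  · calc dist ((glue y α * γ) i) ((glue y α * γ) i')
        ≤ dist ((glue y α * γ) i) ((glue y α * γ) (y (s + 1))) +
            dist ((glue y α * γ) (y (s + 1))) ((glue y α * γ) i') :=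
          dist_triangle _ _ _
      _ = dist ((α s * γ) i) ((α s * γ) (y (s + 1))) +
            dist ((α (s + 1) * γ) (y (s + 1))) ((α (s + 1) * γ) i') := by
          rw [dist_mul_apply_eq_of_eq (glue_apply_of_mem hy h0 hsi his)
              (glue_apply_boundary hy h0 s),
            dist_mul_apply_eq_of_eq (glue_apply_of_mem hy h0 le_rfl (hy (lt_add_one _)))
              (glue_apply_of_mem hy h0 hsi' hi')]
      _ < ε / 2 + ε / 2 := add_lt_add
          ((hS s (by omega)).2 i hsi _ (hW.mono le_rfl his.le hsi'))
          ((hS (s + 1) (by omega)).2 _ le_rfl i' (hW.mono his.le hsi' le_rfl))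
      _ = ε := add_halves ε

theorem exists_oscVanishes_mul_inv {G : Type*} [Group G] [PseudoMetricSpace G]
    [IsIsometricSMul G G] (X : ℕ → Set ℕ) (α : ℕ → ℕ → G)
    (hcoh : ∀ n m : ℕ, n ≤ m → OscVanishes (X n) (α m * (α n)⁻¹))
    (Y : Set ℕ) (hY : Y.Infinite) (hYX : ∀ n, AlmostSubset Y (X n)) :
    ∃ β : ℕ → G, ∀ n, OscVanishes (X n) (β * (α n)⁻¹) := by
  have hthreshold : ∀ s, ∀ᶠ i in atTop, ∀ n ≤ s, (i ∈ Y → i ∈ X n) ∧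
      ∀ i', WithinTwoBlocks (X n) i i' →
        dist ((α s * (α n)⁻¹) i) ((α s * (α n)⁻¹) i') < 1 / ((s : ℝ) + 1) := fun s =>
    (eventually_all_finite (Set.finite_Iic s)).2 fun n hn =>
      (hYX n).eventually_mem.and (hcoh n s hn _ Nat.one_div_pos_of_nat)
  choose N hN using fun s => eventually_atTop.1 (hthreshold s)
  obtain ⟨y, hy, hy0, hyY⟩ := hY.exists_strictMono_mem_ge N
  have hP : ∀ s ≠ 0, ∀ i ≥ y s, _ := fun s hs i hi => hN s i ((hyY s hs).2.trans hi)
  refine ⟨glue y α, fun n => oscVanishes_glue_mul hy hy0 ?_ fun ε hε => ?_⟩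
  · filter_upwards [eventually_ge_atTop (n + 1)] with s hs
    exact (hP s (by omega) (y s) le_rfl n (by omega)).1 (hyY s (by omega)).1
  · obtain ⟨k, hk⟩ := exists_nat_one_div_lt hε
    filter_upwards [eventually_ge_atTop (max n k + 1)] with s hs i hi i' hW
    have hsk : 1 / ((s : ℝ) + 1) ≤ 1 / ((k : ℝ) + 1) := Nat.one_div_le_one_div (by omega)
    exact ((hP s (by omega) i hi n (by omega)).2 i' hW).trans_le (hsk.trans hk.le)

theorem limit_stage_general (X : ℕ → Set ℕ) (hXinf : ∀ n, (X n).Infinite)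
    (α : ℕ → ℕ → Circle)
    (hcoh : ∀ n m : ℕ, n ≤ m → memF (X n) (α n * (α m)⁻¹))
    (Y : Set ℕ) (hY : Y.Infinite) (hYX : ∀ n, AlmostSubset Y (X n)) :
    ∃ β : ℕ → Circle, ∀ n, memF (X n) (β * (α n)⁻¹) := by
  have hcoh' : ∀ n m : ℕ, n ≤ m → OscVanishes (X n) (α m * (α n)⁻¹) := fun n m hnm => by
    simpa only [mul_inv_rev, inv_inv] using
      ((memF_iff_oscVanishes (hXinf n) _).1 (hcoh n m hnm)).inv
  obtain ⟨β, hβ⟩ := exists_oscVanishes_mul_inv X α hcoh' Y hY hYX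
  exact ⟨β, fun n => (memF_iff_oscVanishes (hXinf n) _).2 (hβ n)⟩

/-- a coherent `ω`-sequence of elements of `𝕋^ℕ` along a decreasing
chain admits a lower bound (a "partial thread" can be extended through a limit). -/
theorem limit_stage (X : ℕ → Set ℕ) (hXinf : ∀ n, (X n).Infinite)
    (hXdec : ∀ n, AlmostSubset (X (n + 1)) (X n))
    (α : ℕ → ℕ → Circle)
    (hcoh : ∀ n m : ℕ, n ≤ m → memF (X n) (α n * (α m)⁻¹))
    (Y : Set ℕ) (hY : Y.Infinite) (hYX : ∀ n, AlmostSubset Y (X n)) :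
    ∃ β : ℕ → Circle, ∀ n, memF (X n) (β * (α n)⁻¹) :=
  limit_stage_general X hXinf α hcoh Y hY hYX
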